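/- arXiv:0902.4649 — 2 statements merged into one kernel-verified Lean document; each statement's English description precedes it below -/
import Mathlib

section
/- With h smooth and 4α+1 > 0, the function F(x,y) = (y + σ+h(x))^{σ−/√(4α+1)} · (y + σ−h(x))^{−σ+/√(4α+1)}, equivalently F = g₁^{−σ−}g₂^{σ+} up to the normalization by √(4α+1), is a first integral of the system ẋ = y + h(x), ẏ = α h(x)h'(x): its derivative along the vector field vanishes identically on the region where both g₁ and g₂ are positive. -/
noncomputable def pdx (f : ℝ → ℝ → ℝ) (x y : ℝ) : ℝ := deriv (fun t => f t y) x
noncomputable def pdy (f : ℝ → ℝ → ℝ) (x y : ℝ) : ℝ := deriv (fun t => f x t) y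

theorem stmt_6 (h : ℝ → ℝ) (hsm : ContDiff ℝ (⊤ : ℕ∞) h) (α : ℝ) (hα : 4 * α + 1 > 0) :
    let s := Real.sqrt (4 * α + 1)
    let σp := (1 + s) / 2
    let σm := (1 - s) / 2
    let g1 : ℝ → ℝ → ℝ := fun x y => y + σp * h x
    let g2 : ℝ → ℝ → ℝ := fun x y => y + σm * h x
    let F : ℝ → ℝ → ℝ := fun x y => g1 x y ^ (-σm / s) * g2 x y ^ (σp / s)
    ∀ x y : ℝ, 0 < g1 x y → 0 < g2 x y →
      pdx F x y * (y + h x) + pdy F x y * (α * h x * deriv h x) = 0 := by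
  intro s σp σm g1 g2 F x y hg1 hg2
  have hs0 : 0 < s := Real.sqrt_pos.mpr hα
  have hs2 : s ^ 2 = 4 * α + 1 := Real.sq_sqrt hα.le
  have hsne : s ≠ 0 := ne_of_gt hs0
  have hg1ne : g1 x y ≠ 0 := ne_of_gt hg1
  have hg2ne : g2 x y ≠ 0 := ne_of_gt hg2
  have hd : HasDerivAt h (deriv h x) x :=
    ((hsm.differentiable (by simp)).differentiableAt).hasDerivAt
  have h1x : HasDerivAt (fun t => y + σp * h t) (σp * deriv h x) x :=
    (hd.const_mul σp).const_add y
  have h2x : HasDerivAt (fun t => y + σm * h t) (σm * deriv h x) x :=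
    (hd.const_mul σm).const_add y
  have hFx : HasDerivAt (fun t => F t y)
      ((σp * deriv h x * (-σm / s) * g1 x y ^ (-σm / s - 1)) * g2 x y ^ (σp / s)
        + g1 x y ^ (-σm / s) * (σm * deriv h x * (σp / s) * g2 x y ^ (σp / s - 1))) x :=
    (h1x.rpow_const (Or.inl hg1ne)).mul (h2x.rpow_const (Or.inl hg2ne))
  have h1y : HasDerivAt (fun t => t + σp * h x) 1 y := (hasDerivAt_id y).add_const _
  have h2y : HasDerivAt (fun t => t + σm * h x) 1 y := (hasDerivAt_id y).add_const _
  have hFy : HasDerivAt (fun t => F x t)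
      ((1 * (-σm / s) * g1 x y ^ (-σm / s - 1)) * g2 x y ^ (σp / s)
        + g1 x y ^ (-σm / s) * (1 * (σp / s) * g2 x y ^ (σp / s - 1))) y :=
    (h1y.rpow_const (Or.inl hg1ne)).mul (h2y.rpow_const (Or.inl hg2ne))
  rw [pdx, pdy, hFx.deriv, hFy.deriv]
  rw [Real.rpow_sub_one hg1ne, Real.rpow_sub_one hg2ne]
  set A := g1 x y ^ (-σm / s) with hA
  set B := g2 x y ^ (σp / s) with hB
  set H := h x with hH
  set H' := deriv h x with hH'
  have hpm : σp * σm = -α := by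
    show ((1 + s) / 2) * ((1 - s) / 2) = -α
    linear_combination (-(1:ℝ)/4) * hs2
  have hps : σp + σm = 1 := by
    show (1 + s) / 2 + (1 - s) / 2 = 1
    ring
  have e1 : g1 x y = y + σp * H := rfl
  have e2 : g2 x y = y + σm * H := rfl
  rw [e1, e2]
  have hG1 : y + σp * H ≠ 0 := e1 ▸ hg1ne
  have hG2 : y + σm * H ≠ 0 := e2 ▸ hg2ne
  set P : ℝ := (σp * H' * (-σm) * (y + σm * H) + σm * H' * σp * (y + σp * H)) * (y + H)
      + ((-σm) * (y + σm * H) + σp * (y + σp * H)) * (α * H * H') with hPdef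
  have hP : P = 0 := by
    rw [hPdef]
    linear_combination ((σp - σm) * H * H' * (y + H)) * hpm
      + ((σp - σm) * H * H' * α * H) * hps
  calc (σp * H' * (-σm / s) * (A / (y + σp * H)) * B
          + A * (σm * H' * (σp / s) * (B / (y + σm * H)))) * (y + H)
        + (1 * (-σm / s) * (A / (y + σp * H)) * B
          + A * (1 * (σp / s) * (B / (y + σm * H)))) * (α * H * H')
      = A * B * P / ((y + σp * H) * (y + σm * H) * s) := by
        rw [hPdef]; field_simp
    _ = 0 := by rw [hP]; simp
end

section
/- Let g(x,y) = (1/6)y⁶ − (1/3)r²y⁴ + (1/6)r⁴y² + (1/6)x⁶ − (1/3)r²x⁴ + (1/6)r⁴x² − (1/39)r⁶ and consider the quintic system ẋ = P = −ν₀(6r² − 6y²)(r² − 3y²)y − λ(r² − x²)x(r² − 3y²), ẏ = Q = ν₀(−3x² + r²)(6r² − 6x²)x + λ(−3x² + r²)(−r² + y²)y. Then the ν₀-component of g_x P + g_y Q is identically zero. -/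
theorem stmt_16 (r ν0 : ℝ) :
    let g : ℝ → ℝ → ℝ := fun x y =>
      (1 / 6) * y ^ 6 - (1 / 3) * r ^ 2 * y ^ 4 + (1 / 6) * r ^ 4 * y ^ 2 +
      (1 / 6) * x ^ 6 - (1 / 3) * r ^ 2 * x ^ 4 + (1 / 6) * r ^ 4 * x ^ 2 -
      (1 / 39) * r ^ 6
    ∀ x y : ℝ,
      (-ν0 * 6 * (r ^ 2 - y ^ 2) * (r ^ 2 - 3 * y ^ 2) * y) * pdx g x y +
        (ν0 * 6 * (r ^ 2 - 3 * x ^ 2) * (r ^ 2 - x ^ 2) * x) * pdy g x y = 0 := by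
  intro g x y
  have hx : HasDerivAt (fun t : ℝ =>
      (1 / 6) * y ^ 6 - (1 / 3) * r ^ 2 * y ^ 4 + (1 / 6) * r ^ 4 * y ^ 2 +
      (1 / 6) * t ^ 6 - (1 / 3) * r ^ 2 * t ^ 4 + (1 / 6) * r ^ 4 * t ^ 2 -
      (1 / 39) * r ^ 6)
      (x ^ 5 - (4 / 3) * r ^ 2 * x ^ 3 + (1 / 3) * r ^ 4 * x) x := by
    have h1 := ((hasDerivAt_pow 6 x).const_mul ((1:ℝ)/6))
    have h2 := ((hasDerivAt_pow 4 x).const_mul ((1/3) * r ^ 2))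
    have h3 := ((hasDerivAt_pow 2 x).const_mul ((1/6) * r ^ 4))
    have h := (((((hasDerivAt_const x ((1 / 6) * y ^ 6 - (1 / 3) * r ^ 2 * y ^ 4 +
        (1 / 6) * r ^ 4 * y ^ 2)).add h1).sub h2).add h3).sub
        (hasDerivAt_const x ((1/39) * r ^ 6)))
    convert h using 1
    · rfl
    · rfl
    · rfl
    push_cast
    ring
  have hy : HasDerivAt (fun t : ℝ =>
      (1 / 6) * t ^ 6 - (1 / 3) * r ^ 2 * t ^ 4 + (1 / 6) * r ^ 4 * t ^ 2 +
      (1 / 6) * x ^ 6 - (1 / 3) * r ^ 2 * x ^ 4 + (1 / 6) * r ^ 4 * x ^ 2 -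
      (1 / 39) * r ^ 6)
      (y ^ 5 - (4 / 3) * r ^ 2 * y ^ 3 + (1 / 3) * r ^ 4 * y) y := by
    have h1 := ((hasDerivAt_pow 6 y).const_mul ((1:ℝ)/6))
    have h2 := ((hasDerivAt_pow 4 y).const_mul ((1/3) * r ^ 2))
    have h3 := ((hasDerivAt_pow 2 y).const_mul ((1/6) * r ^ 4))
    have h := ((((h1.sub h2).add h3).add (hasDerivAt_const y ((1 / 6) * x ^ 6 -
        (1 / 3) * r ^ 2 * x ^ 4 + (1 / 6) * r ^ 4 * x ^ 2))).sub
        (hasDerivAt_const y ((1/39) * r ^ 6)))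
    convert h using 1
    · rfl
    · rfl
    · exact funext fun t => by simp only [Pi.add_apply, Pi.sub_apply]; ring
    · push_cast; ring
  have hpx : pdx g x y = x ^ 5 - (4 / 3) * r ^ 2 * x ^ 3 + (1 / 3) * r ^ 4 * x := by
    simpa [pdx, g] using hx.deriv
  have hpy : pdy g x y = y ^ 5 - (4 / 3) * r ^ 2 * y ^ 3 + (1 / 3) * r ^ 4 * y := by
    simpa [pdy, g] using hy.deriv
  rw [hpx, hpy]; ring
end
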